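/- arXiv:1205.0185 — 3 statements merged into one kernel-verified Lean document; each statement's English description precedes it below -/
import Mathlib

section
/- Let p ≥ 2, d ≥ 1, and 1 ≤ s ≤ d be integers. Then ∑_{λ ∈ Par(d)} (m_s(λ)/(p-1)) · ∏_{u ≥ 1} binom(m_u(λ)+p-2, m_u(λ)) = ∑_{(λ_1,…,λ_{p-1}) ∈ Par_{p-1}(d)} m_s(λ_1), where the first sum is an identity of rational numbers whose value is an integer. -/
open Finset

/-! Write `q = p - 1`, so that `binom(m + p - 2, m) = multichoose q m`. Merging the components
of a `q`-multipartition of `d` gives a partition `λ` of `d`, and the multipartitions merging to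
`λ` are the ordered decompositions of the multiset of parts of `λ` into `q` sub-multisets;
transposing, there are `∏_u multichoose q (m_u(λ))` of them. Hence the total of `m_s` over all
components of all multipartitions is `∑_λ m_s(λ) ∏_u multichoose q (m_u(λ))`, while by the
symmetry of the components it is `q` times the sum of `m_s(λ_1)`. -/

/-- The sum `∑_{(λ_1,…,λ_{p-1}) ∈ Par_{p-1}(d)} m_s(λ_1)`: multipartitions are enumerated by
first choosing the sizes (an element of `antidiagonalTuple (p-1) d`) and then a partition of
each size; for fixed sizes, the number of multipartitions with first component `μ` is the
product of the partition counts of the remaining sizes. -/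
def multipartitionCountSum (p d s : ℕ) (hp : 2 ≤ p) : ℕ :=
  ∑ c ∈ Finset.Nat.antidiagonalTuple (p - 1) d,
    (∑ μ : Nat.Partition (c ⟨0, by omega⟩), μ.parts.count s) *
      ∏ i ∈ Finset.univ.erase (⟨0, by omega⟩ : Fin (p - 1)), Fintype.card (Nat.Partition (c i))

theorem Finset.Nat.card_antidiagonalTuple (k n : ℕ) :
    #(Finset.Nat.antidiagonalTuple k n) = Nat.multichoose k n := by
  rw [← Finset.piAntidiag_univ_fin_eq_antidiagonalTuple, ← Finset.map_sym_eq_piAntidiag,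
    card_map, sym_univ, card_univ, Sym.card_sym_eq_multichoose, Fintype.card_fin]

theorem Nat.Partition.toFinset_parts_subset_Icc {n : ℕ} (μ : Nat.Partition n) :
    μ.parts.toFinset ⊆ Icc 1 n := fun _ hu => by
  rw [Multiset.mem_toFinset] at hu
  exact mem_Icc.2 ⟨μ.parts_pos hu, μ.le_of_mem_parts hu⟩

theorem Fintype.sum_pi_eval_eq_card_smul {ι M : Type*} [Fintype ι] [DecidableEq ι]
    {β : ι → Type*} [∀ i, Fintype (β i)] [AddCommMonoid M] (i₀ : ι) (F : β i₀ → M) :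
    ∑ f : (∀ i, β i), F (f i₀) = (∏ i ∈ univ.erase i₀, Fintype.card (β i)) • ∑ b, F b := by
  have hcard : Fintype.card (∀ j : {j // j ≠ i₀}, β j) =
      ∏ i ∈ univ.erase i₀, Fintype.card (β i) := by
    rw [Fintype.card_pi]
    exact (prod_subtype (univ.erase i₀) (fun _ => by simp) (fun i => Fintype.card (β i))).symm
  rw [Fintype.sum_equiv (Equiv.piSplitAt i₀ β) (fun f => F (f i₀)) (fun x => F x.1)
    (fun _ => rfl), Fintype.sum_prod_type, smul_sum]
  simp only [sum_const, card_univ, hcard]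

namespace Multiset

variable {α : Type*} [DecidableEq α]

theorem count_sum_replicate (S : Finset α) (b : S → ℕ) (v : α) :
    count v (∑ u : S, replicate (b u) (u : α)) = if h : v ∈ S then b ⟨v, h⟩ else 0 := by
  simp only [count_sum', count_replicate]
  split_ifs with hv
  · rw [Finset.sum_eq_single_of_mem ⟨v, hv⟩ (Finset.mem_univ _) fun u _ hu => ?_, if_pos rfl]
    exact if_neg fun h => hu (Subtype.ext h)
  · exact Finset.sum_eq_zero fun u _ => if_neg fun (h : (u : α) = v) => hv (h ▸ u.2)

def decompositions (q : ℕ) (M : Multiset α) : Finset (Fin q → Multiset α) :=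
  (Fintype.piFinset fun _ => M.powerset.toFinset).filter fun g => ∑ i, g i = M

variable {q : ℕ} {M : Multiset α}

theorem mem_decompositions {g : Fin q → Multiset α} :
    g ∈ decompositions q M ↔ ∑ i, g i = M := by
  simp only [decompositions, Finset.mem_filter, Fintype.mem_piFinset, mem_toFinset, mem_powerset,
    and_iff_right_iff_imp]
  rintro rfl i
  exact Finset.single_le_sum (fun _ _ => zero_le _) (Finset.mem_univ i)

theorem le_of_mem_decompositions {g : Fin q → Multiset α} (hg : g ∈ decompositions q M)
    (i : Fin q) : g i ≤ M :=
  mem_decompositions.1 hg ▸ Finset.single_le_sum (fun _ _ => zero_le _) (Finset.mem_univ i)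

theorem card_decompositions (q : ℕ) (M : Multiset α) :
    #(decompositions q M) = ∏ u ∈ M.toFinset, Nat.multichoose q (M.count u) := by
  simp_rw [← prod_coe_sort M.toFinset, ← Finset.Nat.card_antidiagonalTuple,
    ← Fintype.card_piFinset]
  refine Finset.card_bij' (fun g _ u j => count (u : α) (g j))
    (fun b _ j => ∑ u : M.toFinset, replicate (b u j) (u : α)) ?_ ?_ ?_ ?_
  · intro g hg
    simp only [Fintype.mem_piFinset, Finset.Nat.mem_antidiagonalTuple]
    intro u
    rw [← count_sum', mem_decompositions.1 hg]
  · intro b hb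
    simp only [Fintype.mem_piFinset, Finset.Nat.mem_antidiagonalTuple] at hb
    rw [mem_decompositions]
    ext v
    rw [count_sum']
    simp only [count_sum_replicate]
    split_ifs with hv
    · exact hb ⟨v, hv⟩
    · rw [Finset.sum_const_zero, count_eq_zero_of_notMem (by simpa using hv)]
  · intro g hg
    funext j
    ext v
    rw [count_sum_replicate]
    split_ifs with hv
    · rfl
    · have := count_le_of_le v (le_of_mem_decompositions hg j)
      rw [count_eq_zero_of_notMem (s := M) (by simpa using hv)] at this
      omega
  · intro b _
    funext u j
    rw [count_sum_replicate, dif_pos u.2]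

theorem sum_decompositions_comp_perm {N : Type*} [AddCommMonoid N] (σ : Equiv.Perm (Fin q))
    (F : (Fin q → Multiset α) → N) :
    ∑ g ∈ decompositions q M, F (g ∘ σ) = ∑ g ∈ decompositions q M, F g := by
  have hmem (τ : Equiv.Perm (Fin q)) {g : Fin q → Multiset α} (hg : g ∈ decompositions q M) :
      g ∘ τ ∈ decompositions q M := by
    rw [mem_decompositions] at hg ⊢
    exact (Equiv.sum_comp τ g).trans hg
  refine sum_nbij' (· ∘ σ) (· ∘ σ.symm) (fun g hg => hmem σ hg) (fun g hg => hmem σ.symm hg)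
    (fun g _ => ?_) (fun g _ => ?_) (fun _ _ => rfl)
  · simp [Function.comp_assoc]
  · simp [Function.comp_assoc]

theorem mul_sum_decompositions_count (M : Multiset α) (a : α) (i : Fin q) :
    q * ∑ g ∈ decompositions q M, count a (g i) = #(decompositions q M) * count a M := by
  calc q * ∑ g ∈ decompositions q M, count a (g i)
      = ∑ _j : Fin q, ∑ g ∈ decompositions q M, count a (g i) := by simp
    _ = ∑ j : Fin q, ∑ g ∈ decompositions q M, count a (g j) := by
        refine Finset.sum_congr rfl fun j _ => ?_
        simpa using (sum_decompositions_comp_perm (M := M) (Equiv.swap i j)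
          fun g => count a (g i)).symm
    _ = ∑ g ∈ decompositions q M, count a M := by
        rw [sum_comm]
        exact sum_congr rfl fun g hg => by rw [← count_sum', mem_decompositions.1 hg]
    _ = #(decompositions q M) * count a M := by rw [sum_const, smul_eq_mul]

end Multiset

def multipartitions (q d : ℕ) : Finset (Σ c : Fin q → ℕ, ∀ j, Nat.Partition (c j)) :=
  (Finset.Nat.antidiagonalTuple q d).sigma fun _ => univ

theorem multipartition_ext {q : ℕ} {x y : Σ c : Fin q → ℕ, ∀ j, Nat.Partition (c j)}
    (h : ∀ j, (x.2 j).parts = (y.2 j).parts) : x = y := by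
  obtain ⟨c, f⟩ := x
  obtain ⟨c', f'⟩ := y
  obtain rfl : c = c' := funext fun j => (f j).parts_sum.symm.trans (h j ▸ (f' j).parts_sum)
  exact congrArg (Sigma.mk c) (funext fun j => Nat.Partition.ext (h j))

theorem sum_multipartitions_eq_sum_decompositions {N : Type*} [AddCommMonoid N] (q d : ℕ)
    (F : (Fin q → Multiset ℕ) → N) :
    ∑ x ∈ multipartitions q d, F (fun j => (x.2 j).parts) =
      ∑ μ : Nat.Partition d, ∑ g ∈ Multiset.decompositions q μ.parts, F g := by
  rw [sum_sigma' univ (fun μ : Nat.Partition d => Multiset.decompositions q μ.parts)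
    fun _ g => F g]
  refine sum_bij'
    (fun x hx => ⟨⟨∑ j, (x.2 j).parts, fun h => ?pos, ?sum⟩, fun j => (x.2 j).parts⟩)
    (fun y hy => ⟨fun j => (y.2 j).sum, fun j => ⟨y.2 j, fun h => y.1.parts_pos
      (Multiset.mem_of_le (Multiset.le_of_mem_decompositions (mem_sigma.1 hy).2 j) h), rfl⟩⟩)
    (fun x _ => mem_sigma.2 ⟨mem_univ _, Multiset.mem_decompositions.2 rfl⟩) ?_
    (fun x _ => multipartition_ext fun _ => rfl) ?_ (fun _ _ => rfl)
  case pos =>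
    obtain ⟨j, -, hj⟩ := Multiset.mem_sum.1 h
    exact (x.2 j).parts_pos hj
  case sum =>
    rw [Multiset.sum_sum, ← (Finset.Nat.mem_antidiagonalTuple.1 (mem_sigma.1 hx).1)]
    exact sum_congr rfl fun j _ => (x.2 j).parts_sum
  · intro y hy
    refine mem_sigma.2 ⟨Finset.Nat.mem_antidiagonalTuple.2 ?_, mem_univ _⟩
    rw [← Multiset.sum_sum, Multiset.mem_decompositions.1 (mem_sigma.1 hy).2, y.1.parts_sum]
  · intro y hy
    obtain ⟨μ, g⟩ := y
    exact Sigma.ext (Nat.Partition.ext (Multiset.mem_decompositions.1 (mem_sigma.1 hy).2))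
      HEq.rfl

theorem sum_count_mul_prod_multichoose (q d s : ℕ) (i₀ : Fin q) :
    ∑ μ : Nat.Partition d, μ.parts.count s *
        ∏ u ∈ Icc 1 d, Nat.multichoose q (μ.parts.count u) =
      q * ∑ c ∈ Finset.Nat.antidiagonalTuple q d,
        (∑ μ : Nat.Partition (c i₀), μ.parts.count s) *
          ∏ i ∈ univ.erase i₀, Fintype.card (Nat.Partition (c i)) := by
  have hmultipartitions : ∑ c ∈ Finset.Nat.antidiagonalTuple q d,
      (∑ μ : Nat.Partition (c i₀), μ.parts.count s) *
        ∏ i ∈ univ.erase i₀, Fintype.card (Nat.Partition (c i)) =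
      ∑ x ∈ multipartitions q d, (x.2 i₀).parts.count s := by
    rw [multipartitions, sum_sigma]
    refine sum_congr rfl fun c _ => ?_
    rw [mul_comm, ← smul_eq_mul]
    exact (Fintype.sum_pi_eval_eq_card_smul (β := fun i => Nat.Partition (c i)) i₀
      fun μ => μ.parts.count s).symm
  rw [hmultipartitions, sum_multipartitions_eq_sum_decompositions q d fun g => (g i₀).count s,
    mul_sum]
  refine sum_congr rfl fun μ _ => ?_
  rw [Multiset.mul_sum_decompositions_count, Multiset.card_decompositions,
    prod_subset μ.toFinset_parts_subset_Icc fun u _ hu => ?_, mul_comm]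
  rw [Multiset.count_eq_zero_of_notMem (by simpa using hu), Nat.multichoose_zero_right]

theorem stmt3_general (p d s : ℕ) (hp : 2 ≤ p) :
    ∑ P : Nat.Partition d,
        (P.parts.count s : ℚ) / (p - 1) *
          ∏ u ∈ Finset.Icc 1 d, ((P.parts.count u + p - 2).choose (P.parts.count u) : ℚ) =
      (multipartitionCountSum p d s hp : ℚ) := by
  have hchoose (m : ℕ) : (m + p - 2).choose m = Nat.multichoose (p - 1) m := by
    rw [Nat.multichoose_eq]
    congr 1
    omega
  have hcount : ∑ P : Nat.Partition d, P.parts.count s *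
      ∏ u ∈ Icc 1 d, Nat.multichoose (p - 1) (P.parts.count u) =
      (p - 1) * multipartitionCountSum p d s hp :=
    sum_count_mul_prod_multichoose (p - 1) d s ⟨0, by omega⟩
  have hp1 : (p : ℚ) - 1 = ((p - 1 : ℕ) : ℚ) := by
    rw [Nat.cast_sub (by omega), Nat.cast_one]
  have hp1_ne : ((p - 1 : ℕ) : ℚ) ≠ 0 := Nat.cast_ne_zero.2 (by omega)
  simp_rw [hchoose, hp1, div_mul_eq_mul_div, ← sum_div, div_eq_iff hp1_ne]
  exact_mod_cast hcount.trans (mul_comm _ _)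

theorem stmt3 (p d s : ℕ) (hp : 2 ≤ p) (hd : 1 ≤ d) (hs : 1 ≤ s) (hsd : s ≤ d) :
    ∑ P : Nat.Partition d,
        (P.parts.count s : ℚ) / (p - 1) *
          ∏ u ∈ Finset.Icc 1 d, ((P.parts.count u + p - 2).choose (P.parts.count u) : ℚ) =
      (multipartitionCountSum p d s hp : ℚ) :=
  stmt3_general p d s hp
end

section
/- For m ≥ 4, let [D_m]_1 be the m×m matrix over ℚ(v) obtained from the type D_m Cartan matrix (a_{ij}) by replacing diagonal entries 2 with v + v^{-1} and off-diagonal entries -1 with -1 (entries 0 stay 0). Then det([D_m]_1) = v^{-m} Φ_4(v) Φ_4(v^{m-1}), where Φ_4(x) = x^2 + 1 is the 4th cyclotomic polynomial. -/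
/-- Adjacency in the type `D_m` Dynkin diagram on nodes `0, …, m-1` (`m ≥ 4`): a chain
`0 – 1 – ⋯ – (m-2)` together with the extra node `m-1` attached to node `m-3`. -/
def Dadj (m a b : ℕ) : Prop :=
  (a + 1 = b ∧ b ≤ m - 2) ∨ (b + 1 = a ∧ a ≤ m - 2) ∨
    (a = m - 3 ∧ b = m - 1) ∨ (b = m - 3 ∧ a = m - 1)

instance (m a b : ℕ) : Decidable (Dadj m a b) := by unfold Dadj; infer_instance

noncomputable def Dmat (m : ℕ) : Matrix (Fin m) (Fin m) (RatFunc ℚ) :=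
  Matrix.of fun i j : Fin m =>
    if i = j then (RatFunc.X : RatFunc ℚ) + (RatFunc.X)⁻¹
    else if Dadj m (i : ℕ) (j : ℕ) then (-1 : RatFunc ℚ) else 0

lemma Dmat_apply (m : ℕ) (i j : Fin m) :
    Dmat m i j = if i = j then (RatFunc.X : RatFunc ℚ) + (RatFunc.X)⁻¹
      else if Dadj m (i : ℕ) (j : ℕ) then (-1 : RatFunc ℚ) else 0 := rfl

lemma Dmat_entry_congr {m m' : ℕ} (i j : Fin m) (i' j' : Fin m')
    (hij : i = j ↔ i' = j') (hadj : Dadj m (i : ℕ) (j : ℕ) ↔ Dadj m' (i' : ℕ) (j' : ℕ)) :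
    Dmat m i j = Dmat m' i' j' := by
  rw [Dmat_apply, Dmat_apply, if_congr hij rfl (if_congr hadj rfl rfl)]

lemma sub1 (k : ℕ) (hk : 4 ≤ k) :
    (Dmat (k + 2)).submatrix Fin.succ Fin.succ = Dmat (k + 1) := by
  ext i j
  have hi := i.isLt; have hj := j.isLt
  refine Dmat_entry_congr _ _ _ _ ?_ ?_
  · exact ⟨fun h => by exact_mod_cast Fin.succ_inj.mp h, fun h => by rw [h]⟩
  · unfold Dadj
    simp only [Fin.val_succ]
    omega

lemma M4 : Dmat 4 = !![RatFunc.X + RatFunc.X⁻¹, -1, 0, 0;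
    -1, RatFunc.X + RatFunc.X⁻¹, -1, -1;
    0, -1, RatFunc.X + RatFunc.X⁻¹, 0;
    0, -1, 0, RatFunc.X + RatFunc.X⁻¹] := by
  ext i j
  fin_cases i <;> fin_cases j <;>
    (simp (config := { decide := true }) [Dmat, Dadj, Matrix.of_apply] <;> try rfl)

lemma base4 : (Dmat 4).det =
    (RatFunc.X + RatFunc.X⁻¹) * (RatFunc.X ^ 3 + (RatFunc.X⁻¹) ^ 3) := by
  have hX : (RatFunc.X : RatFunc ℚ) ≠ 0 := RatFunc.X_ne_zero
  have hu : RatFunc.X * RatFunc.X⁻¹ = (1 : RatFunc ℚ) := mul_inv_cancel₀ hX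
  have hdet : (Dmat 4).det =
      (RatFunc.X + RatFunc.X⁻¹) ^ 4 - 3 * (RatFunc.X + RatFunc.X⁻¹) ^ 2 := by
    rw [M4]
    simp [Matrix.det_succ_row_zero, Fin.sum_univ_succ,
      show ((1 : Fin 4).succAbove 2) = 3 from rfl]
    ring
  rw [hdet]
  linear_combination (3 * (RatFunc.X + RatFunc.X⁻¹) ^ 2) * hu

lemma M5 : Dmat 5 = !![RatFunc.X + RatFunc.X⁻¹, -1, 0, 0, 0;
    -1, RatFunc.X + RatFunc.X⁻¹, -1, 0, 0;
    0, -1, RatFunc.X + RatFunc.X⁻¹, -1, -1;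
    0, 0, -1, RatFunc.X + RatFunc.X⁻¹, 0;
    0, 0, -1, 0, RatFunc.X + RatFunc.X⁻¹] := by
  ext i j
  fin_cases i <;> fin_cases j <;>
    (simp (config := { decide := true }) [Dmat, Dadj, Matrix.of_apply] <;> try rfl)

lemma base5 : (Dmat 5).det =
    (RatFunc.X + RatFunc.X⁻¹) * (RatFunc.X ^ 4 + (RatFunc.X⁻¹) ^ 4) := by
  have hX : (RatFunc.X : RatFunc ℚ) ≠ 0 := RatFunc.X_ne_zero
  have hu : RatFunc.X * RatFunc.X⁻¹ = (1 : RatFunc ℚ) := mul_inv_cancel₀ hX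
  have hdet : (Dmat 5).det = (RatFunc.X + RatFunc.X⁻¹) ^ 5 -
      4 * (RatFunc.X + RatFunc.X⁻¹) ^ 3 + 2 * (RatFunc.X + RatFunc.X⁻¹) := by
    rw [M5]
    simp [Matrix.det_succ_row_zero, Fin.sum_univ_succ,
      show ((1 : Fin 4).succAbove 2) = 3 from rfl,
      show ((1 : Fin 5).succAbove 2) = 3 from rfl, show ((1 : Fin 5).succAbove 3) = 4 from rfl,
      show ((2 : Fin 5).succAbove 2) = 3 from rfl, show ((2 : Fin 5).succAbove 3) = 4 from rfl]
    ring
  rw [hdet]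
  linear_combination ((RatFunc.X + RatFunc.X⁻¹) *
    (4 * RatFunc.X ^ 2 + 4 * RatFunc.X⁻¹ ^ 2 + 6 * (RatFunc.X * RatFunc.X⁻¹) - 2)) * hu

lemma det_minor (k : ℕ) (hk : 4 ≤ k) :
    ((Dmat (k + 2)).submatrix Fin.succ (Fin.succAbove 1)).det = -(Dmat k).det := by
  have hs0 : (1 : Fin (k + 2)).succAbove 0 = 0 := by
    rw [Fin.succAbove_of_castSucc_lt]
    · rfl
    · rw [Fin.lt_def]
      simp
  have hss : ∀ j : Fin k, (1 : Fin (k + 2)).succAbove j.succ = j.succ.succ := by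
    intro j
    exact Fin.succAbove_of_le_castSucc _ _ (by rw [Fin.le_def]; simp)
  have hN00 : ((Dmat (k + 2)).submatrix Fin.succ (Fin.succAbove 1)) 0 0 = -1 := by
    show Dmat (k + 2) (Fin.succ 0) ((1 : Fin (k + 2)).succAbove 0) = -1
    rw [hs0, Dmat_apply, if_neg (Fin.succ_ne_zero 0), if_pos]
    have e1 : ((Fin.succ (0 : Fin (k + 1))) : ℕ) = 1 := rfl
    have e2 : (((0 : Fin (k + 2))) : ℕ) = 0 := rfl
    rw [e1, e2]
    unfold Dadj
    omega
  have hNz : ∀ i : Fin k, ((Dmat (k + 2)).submatrix Fin.succ (Fin.succAbove 1)) i.succ 0 = 0 := by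
    intro i
    show Dmat (k + 2) i.succ.succ ((1 : Fin (k + 2)).succAbove 0) = 0
    have hi := i.isLt
    rw [hs0, Dmat_apply, if_neg (Fin.succ_ne_zero _), if_neg]
    have e1 : ((i.succ.succ : Fin (k + 2)) : ℕ) = (i : ℕ) + 2 := rfl
    have e2 : (((0 : Fin (k + 2))) : ℕ) = 0 := rfl
    rw [e1, e2]
    unfold Dadj
    omega
  have hsub : ((Dmat (k + 2)).submatrix Fin.succ (Fin.succAbove 1)).submatrix
      Fin.succ Fin.succ = Dmat k := by
    ext i j
    show Dmat (k + 2) i.succ.succ ((1 : Fin (k + 2)).succAbove j.succ) = Dmat k i j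
    rw [hss j]
    have hi := i.isLt; have hj := j.isLt
    refine Dmat_entry_congr _ _ _ _ ?_ ?_
    · exact ⟨fun h => Fin.succ_inj.mp (Fin.succ_inj.mp h), fun h => by rw [h]⟩
    · unfold Dadj
      simp only [Fin.val_succ]
      omega
  rw [Matrix.det_succ_column_zero, Fin.sum_univ_succ,
    Finset.sum_eq_zero (fun i _ => by rw [hNz i]; ring), hN00,
    show (0 : Fin (k + 1)).succAbove = Fin.succ from Fin.succAbove_zero, hsub]
  simp

lemma Dmat_det_rec (k : ℕ) (hk : 4 ≤ k) :
    (Dmat (k + 2)).det =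
      (RatFunc.X + RatFunc.X⁻¹) * (Dmat (k + 1)).det - (Dmat k).det := by
  have h00 : Dmat (k + 2) 0 0 = RatFunc.X + RatFunc.X⁻¹ := by
    rw [Dmat_apply, if_pos rfl]
  have h01 : Dmat (k + 2) 0 (Fin.succ 0) = -1 := by
    rw [Dmat_apply, if_neg (Ne.symm (Fin.succ_ne_zero 0)), if_pos]
    have e1 : ((Fin.succ (0 : Fin (k + 1))) : ℕ) = 1 := rfl
    have e2 : (((0 : Fin (k + 2))) : ℕ) = 0 := rfl
    rw [e1, e2]
    unfold Dadj
    omega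
  have hz : ∀ j : Fin k, Dmat (k + 2) 0 j.succ.succ = 0 := by
    intro j
    have hj := j.isLt
    rw [Dmat_apply, if_neg (Ne.symm (Fin.succ_ne_zero _)), if_neg]
    have e1 : ((j.succ.succ : Fin (k + 2)) : ℕ) = (j : ℕ) + 2 := rfl
    have e2 : (((0 : Fin (k + 2))) : ℕ) = 0 := rfl
    rw [e1, e2]
    unfold Dadj
    omega
  rw [Matrix.det_succ_row_zero (Dmat (k + 2)), Fin.sum_univ_succ, Fin.sum_univ_succ,
    Finset.sum_eq_zero (fun j _ => by rw [hz j]; ring), h00, h01,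
    show (0 : Fin (k + 2)).succAbove = Fin.succ from Fin.succAbove_zero, sub1 k hk,
    Fin.succ_zero_eq_one, det_minor k hk]
  simp
  ring

lemma detD (m : ℕ) (hm : 4 ≤ m) :
    (Dmat m).det =
      (RatFunc.X + RatFunc.X⁻¹) * (RatFunc.X ^ (m - 1) + (RatFunc.X⁻¹) ^ (m - 1)) := by
  induction m using Nat.strong_induction_on with
  | _ m ih =>
    rcases Nat.lt_or_ge m 6 with h6 | h6
    · interval_cases m
      · exact base4
      · exact base5
    · obtain ⟨k, hk4, rfl⟩ : ∃ k, 4 ≤ k ∧ m = k + 2 := ⟨m - 2, by omega, by omega⟩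
      rw [Dmat_det_rec k hk4, ih (k + 1) (by omega) (by omega), ih k (by omega) (by omega)]
      obtain ⟨j, rfl⟩ : ∃ j, k = j + 1 := ⟨k - 1, by omega⟩
      have hX : (RatFunc.X : RatFunc ℚ) ≠ 0 := RatFunc.X_ne_zero
      have e1 : j + 1 + 2 - 1 = j + 2 := by omega
      have e2 : j + 1 + 1 - 1 = j + 1 := by omega
      have e3 : j + 1 - 1 = j := by omega
      rw [e1, e2, e3]
      have hu : RatFunc.X * RatFunc.X⁻¹ = (1 : RatFunc ℚ) := mul_inv_cancel₀ hX
      linear_combination ((RatFunc.X + RatFunc.X⁻¹) *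
        ((RatFunc.X : RatFunc ℚ) ^ j + RatFunc.X⁻¹ ^ j)) * hu

theorem stmt5 (m : ℕ) (hm : 4 ≤ m) :
    (Matrix.of fun i j : Fin m =>
        if i = j then (RatFunc.X : RatFunc ℚ) + (RatFunc.X)⁻¹
        else if Dadj m (i : ℕ) (j : ℕ) then (-1 : RatFunc ℚ) else 0).det =
      (RatFunc.X : RatFunc ℚ) ^ (-(m : ℤ)) *
        Polynomial.aeval (RatFunc.X : RatFunc ℚ) (Polynomial.cyclotomic 4 ℚ) *
        Polynomial.aeval ((RatFunc.X : RatFunc ℚ) ^ (m - 1)) (Polynomial.cyclotomic 4 ℚ) := by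
  have hcyc : Polynomial.cyclotomic 4 ℚ = Polynomial.X ^ 2 + 1 := by
    have h := Polynomial.cyclotomic_prime_pow_eq_geom_sum (R := ℚ) (p := 2) (n := 1)
      Nat.prime_two
    norm_num [Finset.sum_range_succ] at h
    rw [h]
    ring
  have h := detD m hm
  have hX : (RatFunc.X : RatFunc ℚ) ≠ 0 := RatFunc.X_ne_zero
  rw [show (Matrix.of fun i j : Fin m =>
        if i = j then (RatFunc.X : RatFunc ℚ) + (RatFunc.X)⁻¹
        else if Dadj m (i : ℕ) (j : ℕ) then (-1 : RatFunc ℚ) else 0) = Dmat m from rfl, h, hcyc]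
  simp only [map_add, map_pow, Polynomial.aeval_X, map_one]
  obtain ⟨n, rfl⟩ : ∃ n, m = n + 4 := ⟨m - 4, by omega⟩
  have e1 : n + 4 - 1 = n + 3 := by omega
  rw [e1, zpow_neg, zpow_natCast, inv_pow]
  have h1 : (RatFunc.X : RatFunc ℚ) ^ (n + 3) ≠ 0 := pow_ne_zero _ hX
  have h2 : (RatFunc.X : RatFunc ℚ) ^ (n + 4) ≠ 0 := pow_ne_zero _ hX
  field_simp
  ring
end

section
/- Let p ≥ 2 be a prime, r ≥ 1, and write a ≥ 1 uniquely as a = ∑_{i=0}^{r-1} a_i p^i with 0 ≤ a_j < p for 0 ≤ j ≤ r-2 and a_{r-1} ≥ 0. Let λ be a partition of a all of whose parts are of the form p^h with 0 ≤ h < r. Then for every 0 ≤ k < r, the inequality ∑_{h=k}^{r-1} a_h p^{h-k} ≥ ∑_{h=k}^{r-1} m_{p^h}(λ) p^{h-k} holds. -/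
/-- The base-`p` "digits" of `a` truncated at position `r-1`: `a_i = (a / p^i) % p` for
`i < r - 1`, while the top coefficient `a_{r-1} = a / p^{r-1}` is unbounded. -/
def topDigit (p r a i : ℕ) : ℕ :=
  if i = r - 1 then a / p ^ (r - 1) else a / p ^ i % p

/-!
Both sides are the base-`p` expansions of quotients by `p ^ k`: the digits on the right
reassemble `a / p ^ k`, while the left side, multiplied by `p ^ k`, is the total size of the
parts of `λ` that are at least `p ^ k`, which is at most `a`.
-/

open Finset

theorem sum_Ico_topDigit_mul_pow (p r a : ℕ) {k : ℕ} (hk : k < r) :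
    ∑ h ∈ Ico k r, topDigit p r a h * p ^ (h - k) = a / p ^ k := by
  induction hn : r - k generalizing k with
  | zero => omega
  | succ n ih =>
    rcases n.eq_zero_or_pos with rfl | hn0
    · obtain rfl : r = k + 1 := by omega
      simp [topDigit]
    have hshift : ∑ h ∈ Ico (k + 1) r, topDigit p r a h * p ^ (h - k)
        = (∑ h ∈ Ico (k + 1) r, topDigit p r a h * p ^ (h - (k + 1))) * p := by
      rw [sum_mul]
      refine sum_congr rfl fun h hh => ?_
      rw [mul_assoc, ← pow_succ, show h - (k + 1) + 1 = h - k by grind]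
    have hdigit : topDigit p r a k = a / p ^ k % p := if_neg (by omega)
    rw [sum_eq_sum_Ico_succ_bot hk, hshift, ih (by omega) (by omega), hdigit, Nat.sub_self,
      pow_zero, mul_one, pow_succ, ← Nat.div_div_eq_div_mul]
    exact Nat.mod_add_div' (a / p ^ k) p

theorem Multiset.sum_range_count_pow_mul_pow {p r : ℕ} (hp : 1 < p) {s : Multiset ℕ}
    (hs : ∀ x ∈ s, ∃ h < r, x = p ^ h) :
    ∑ h ∈ Finset.range r, s.count (p ^ h) * p ^ h = s.sum := by
  have hsub : s.toFinset ⊆ (Finset.range r).image (p ^ ·) := by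
    intro x hx
    obtain ⟨h, hhr, rfl⟩ := hs x (Multiset.mem_toFinset.1 hx)
    exact mem_image_of_mem _ (mem_range.2 hhr)
  rw [sum_multiset_count_of_subset s _ hsub,
    sum_image fun _ _ _ _ h => Nat.pow_right_injective hp h]
  rfl

theorem Multiset.sum_Ico_count_pow_mul_pow_le {p r k : ℕ} (hp : 1 < p) {s : Multiset ℕ}
    (hs : ∀ x ∈ s, ∃ h < r, x = p ^ h) :
    ∑ h ∈ Finset.Ico k r, s.count (p ^ h) * p ^ (h - k) ≤ s.sum / p ^ k := by
  have hrescale : (∑ h ∈ Finset.Ico k r, s.count (p ^ h) * p ^ (h - k)) * p ^ k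
      = ∑ h ∈ Finset.Ico k r, s.count (p ^ h) * p ^ h := by
    rw [sum_mul]
    refine sum_congr rfl fun h hh => ?_
    rw [mul_assoc, ← pow_add, Nat.sub_add_cancel (mem_Ico.1 hh).1]
  rw [Nat.le_div_iff_mul_le (by positivity), hrescale, ← sum_range_count_pow_mul_pow hp hs,
    range_eq_Ico]
  exact sum_le_sum_of_subset (Ico_subset_Ico_left k.zero_le)

theorem stmt9_general (p r a : ℕ) (hp : p.Prime)
    (P : Nat.Partition a) (hparts : ∀ x ∈ P.parts, ∃ h < r, x = p ^ h) :
    ∀ k < r,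
      ∑ h ∈ Finset.Ico k r, P.parts.count (p ^ h) * p ^ (h - k) ≤
        ∑ h ∈ Finset.Ico k r, topDigit p r a h * p ^ (h - k) := by
  intro k hk
  rw [sum_Ico_topDigit_mul_pow p r a hk]
  simpa only [P.parts_sum] using Multiset.sum_Ico_count_pow_mul_pow_le (k := k) hp.one_lt hparts

theorem stmt9 (p r a : ℕ) (hp : p.Prime) (hr : 1 ≤ r) (ha : 1 ≤ a)
    (P : Nat.Partition a) (hparts : ∀ x ∈ P.parts, ∃ h < r, x = p ^ h) :
    ∀ k < r,
      ∑ h ∈ Finset.Ico k r, P.parts.count (p ^ h) * p ^ (h - k) ≤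
        ∑ h ∈ Finset.Ico k r, topDigit p r a h * p ^ (h - k) :=
  stmt9_general p r a hp P hparts
end
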